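/- arXiv:1403.1385 — 5 statements merged into one kernel-verified Lean document; each statement's English description precedes it below -/
import Mathlib

section
/- Fix a parameter p with 1/2 ≤ p ≤ 1. For every θ ∈ [0,1] and every n ∈ ℕ, if Φ^k(θ) ≠ 1/2 for all 0 ≤ k < n, then Φ^n(1-θ) = 1 - Φ^n(θ). In particular the maps f_B and f_T satisfy f_B(1-x) = 1 - f_T(x) for all x ∈ [0,1]. -/
/-! The reflection `x ↦ 1 - x` conjugates `f_T` into `f_B`, so `Φ` commutes with it at every
point other than the fixed point `1/2` of the reflection, where both sides use the same branch.
Along an orbit that avoids `1/2` the commutation propagates to all iterates. -/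

noncomputable section

/-- The map `f_B`: `f_B(θ) = (3p-1) - γ/θ` for `θ ≥ 1/2`, and `1-p` for `θ ≤ 1/2`,
where `γ = 2p - 1`. -/
def fB (p θ : ℝ) : ℝ := if 1/2 ≤ θ then (3*p - 1) - (2*p - 1)/θ else 1 - p

/-- The map `f_T`: `f_T(θ) = p` for `θ ≥ 1/2`, and `(2-3p) + γ/(1-θ)` for `θ ≤ 1/2`. -/
def fT (p θ : ℝ) : ℝ := if 1/2 ≤ θ then p else (2 - 3*p) + (2*p - 1)/(1 - θ)

/-- The belief dynamics `Φ`: `Φ(x) = f_B(x)` if `x ≥ 1/2`, `f_T(x)` otherwise. -/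
def Phi (p x : ℝ) : ℝ := if 1/2 ≤ x then fB p x else fT p x

theorem Function.iterate_commute_apply_of_orbit_avoids {α : Type*} {f g : α → α} {s : Set α}
    (h : ∀ x ∉ s, f (g x) = g (f x)) (n : ℕ) (x : α) (hx : ∀ k < n, f^[k] x ∉ s) :
    f^[n] (g x) = g (f^[n] x) := by
  induction n generalizing x with
  | zero => rfl
  | succ n ih =>
    rw [iterate_succ_apply, iterate_succ_apply, h x (hx 0 n.succ_pos)]
    exact ih (f x) fun k hk => by simpa only [iterate_succ_apply] using hx (k + 1) (by omega)

theorem fB_one_sub (p x : ℝ) : fB p (1 - x) = 1 - fT p x := by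
  unfold fB fT
  split_ifs
  · -- the only overlap of the two branches is `x = 1/2`
    obtain rfl : x = 1/2 := by linarith
    norm_num
    ring
  · ring
  · ring
  · linarith

theorem Phi_one_sub (p : ℝ) {x : ℝ} (hx : x ≠ 1/2) : Phi p (1 - x) = 1 - Phi p x := by
  rcases hx.lt_or_gt with hlt | hgt
  · have : (1:ℝ)/2 ≤ 1 - x := by linarith
    rw [Phi, Phi, if_pos this, if_neg hlt.not_ge, fB_one_sub]
  · have : ¬ (1:ℝ)/2 ≤ 1 - x := by linarith
    rw [Phi, Phi, if_neg this, if_pos hgt.le]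
    linarith [sub_sub_cancel (1:ℝ) x ▸ fB_one_sub p (1 - x)]

theorem symmetry_of_Phi_iterates_general (p : ℝ) :
    (∀ θ ∈ Set.Icc (0:ℝ) 1, ∀ n : ℕ,
      (∀ k < n, (Phi p)^[k] θ ≠ 1/2) →
      (Phi p)^[n] (1 - θ) = 1 - (Phi p)^[n] θ) ∧
    (∀ x ∈ Set.Icc (0:ℝ) 1, fB p (1 - x) = 1 - fT p x) :=
  ⟨fun θ _ n hθ => Function.iterate_commute_apply_of_orbit_avoids
      (f := Phi p) (g := (1 - ·)) (s := {1/2}) (fun _ hx => Phi_one_sub p hx) n θ hθ,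
    fun x _ => fB_one_sub p x⟩

theorem symmetry_of_Phi_iterates (p : ℝ) (hp : 1/2 ≤ p) (hp1 : p ≤ 1) :
    (∀ θ ∈ Set.Icc (0:ℝ) 1, ∀ n : ℕ,
      (∀ k < n, (Phi p)^[k] θ ≠ 1/2) →
      (Phi p)^[n] (1 - θ) = 1 - (Phi p)^[n] θ) ∧
    (∀ x ∈ Set.Icc (0:ℝ) 1, fB p (1 - x) = 1 - fT p x) :=
  symmetry_of_Phi_iterates_general p
end
end

section
/- Fix a parameter p with 1/2 ≤ p ≤ 1, let n ≥ 1 and θ ∈ [0,1]. Set θ_i = Φ^{n-i}(θ) for 0 ≤ i ≤ n (so θ_0 = Φ^n(θ) and θ_n = θ), and let ε_i = 1 if θ_i ≥ 1/2 and ε_i = 0 otherwise. Then A_{ε_n} · A_{ε_{n-1}} · ⋯ · A_{ε_1} · (θ_0 - 1, θ_0)ᵀ = (∏_{i=1}^{n} γ / max(θ_i, 1-θ_i)) · (θ_n - 1, θ_n)ᵀ. -/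
/-! A single application of `A_{ε(t)}` carries the vector `(Φ t - 1, Φ t)` to
`γ / max(t, 1 - t)` times `(t - 1, t)`; this one-step identity telescopes along the orbit. -/

noncomputable section

/-- The matrix `A₀ = [[γ, -γ], [1-p, p]]` with `γ = 2p-1`. -/
def A0 (p : ℝ) : Matrix (Fin 2) (Fin 2) ℝ := !![2*p - 1, -(2*p - 1); 1 - p, p]

/-- The matrix `A₁ = [[p, 1-p], [-γ, γ]]` with `γ = 2p-1`. -/
def A1 (p : ℝ) : Matrix (Fin 2) (Fin 2) ℝ := !![p, 1 - p; -(2*p - 1), 2*p - 1]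

/-- `A_{ε(t)}`, where `ε(t) = 1` if `t ≥ 1/2` and `ε(t) = 0` otherwise. -/
def Aeps (p t : ℝ) : Matrix (Fin 2) (Fin 2) ℝ := if 1/2 ≤ t then A1 p else A0 p

open Matrix

theorem Matrix.list_prod_map_iterate_mulVec {α R m : Type*} [Fintype m] [DecidableEq m]
    [CommSemiring R] {f : α → α} {M : α → Matrix m m R} {v : α → m → R} {c : α → R}
    (h : ∀ t, M t *ᵥ v (f t) = c t • v t) (n : ℕ) (x : α) :
    ((List.range n).map fun j => M (f^[j] x)).prod *ᵥ v (f^[n] x)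
      = (∏ j ∈ Finset.range n, c (f^[j] x)) • v x := by
  induction n with
  | zero => simp
  | succ n ih =>
    rw [List.range_succ, List.map_append, List.prod_append, Finset.prod_range_succ,
      List.map_singleton, List.prod_singleton, ← mulVec_mulVec,
      Function.iterate_succ_apply', h, mulVec_smul, ih, smul_smul, mul_comm]

theorem A1_mulVec_fB (p : ℝ) {t : ℝ} (ht : 1/2 ≤ t) :
    A1 p *ᵥ ![fB p t - 1, fB p t] = ((2*p - 1) / t) • ![t - 1, t] := by
  have ht0 : t ≠ 0 := by positivity
  rw [fB, if_pos ht]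
  simp only [A1, cons_mulVec, empty_mulVec, vec2_dotProduct', smul_vec2, smul_eq_mul]
  refine vec2_eq ?_ ?_ <;> field_simp <;> ring

theorem A0_mulVec_fT (p : ℝ) {t : ℝ} (ht : t < 1/2) :
    A0 p *ᵥ ![fT p t - 1, fT p t] = ((2*p - 1) / (1 - t)) • ![t - 1, t] := by
  have ht1 : 1 - t ≠ 0 := by linarith
  rw [fT, if_neg (not_le.mpr ht)]
  simp only [A0, cons_mulVec, empty_mulVec, vec2_dotProduct', smul_vec2, smul_eq_mul]
  refine vec2_eq ?_ ?_ <;> field_simp <;> ring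

theorem Aeps_mulVec_Phi (p t : ℝ) :
    Aeps p t *ᵥ ![Phi p t - 1, Phi p t] = ((2*p - 1) / max t (1 - t)) • ![t - 1, t] := by
  rcases le_or_gt (1/2) t with ht | ht
  · rw [Aeps, Phi, if_pos ht, if_pos ht, max_eq_left (by linarith), A1_mulVec_fB p ht]
  · rw [Aeps, Phi, if_neg (not_le.mpr ht), if_neg (not_le.mpr ht), max_eq_right (by linarith),
      A0_mulVec_fT p ht]

-- `[Aeps θ, Aeps (Φ θ), …, Aeps (Φ^{n-1} θ)]` is `[A_{ε_n}, …, A_{ε_1}]`, and `j ∈ range n`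
-- indexes `θ_i = Φ^j θ` with `i = n - j`.
theorem matrix_cocycle_product_general (p : ℝ) (n : ℕ) (θ : ℝ) :
    (((List.range n).map (fun j => Aeps p ((Phi p)^[j] θ))).prod).mulVec
        ![(Phi p)^[n] θ - 1, (Phi p)^[n] θ]
      = (∏ j ∈ Finset.range n,
          (2*p - 1) / max ((Phi p)^[j] θ) (1 - (Phi p)^[j] θ)) • ![θ - 1, θ] :=
  list_prod_map_iterate_mulVec (v := fun t => ![t - 1, t]) (Aeps_mulVec_Phi p) n θ

/-- With `θ_i = Φ^{n-i}(θ)` (so `θ_0 = Φ^n(θ)`, `θ_n = θ`) and `ε_i = ε(θ_i)`,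
the product `A_{ε_n} ⋯ A_{ε_1}` applied to `(θ_0 - 1, θ_0)ᵀ` equals
`∏_{i=1}^{n} γ/max(θ_i, 1-θ_i)` times `(θ_n - 1, θ_n)ᵀ`.
(The list `[Aeps θ, Aeps (Φ θ), …, Aeps (Φ^{n-1} θ)] = [A_{ε_n}, …, A_{ε_1}]`, multiplied
left to right, and the product over `j ∈ range n` runs over `θ_i = Φ^j(θ)`, `i = n - j`.) -/
theorem matrix_cocycle_product (p : ℝ) (hp : 1/2 ≤ p) (hp1 : p ≤ 1) (n : ℕ) (hn : 1 ≤ n)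
    (θ : ℝ) (hθ : θ ∈ Set.Icc (0:ℝ) 1) :
    (((List.range n).map (fun j => Aeps p ((Phi p)^[j] θ))).prod).mulVec
        ![(Phi p)^[n] θ - 1, (Phi p)^[n] θ]
      = (∏ j ∈ Finset.range n,
          (2*p - 1) / max ((Phi p)^[j] θ) (1 - (Phi p)^[j] θ)) • ![θ - 1, θ] :=
  matrix_cocycle_product_general p n θ
end
end

section
/- Fix a parameter p with 1/2 ≤ p ≤ 1. Set p_n = Φ^n(p), u_n = max(p_n, 1-p_n), and ε_n = 1 if p_n ≥ 1/2 and ε_n = 0 otherwise. Then for every n ≥ 0, ∏_{k=0}^{n} u_k = (0, 1) · U_{ε_n} U_{ε_{n-1}} ⋯ U_{ε_0} · (p, 1)ᵀ. -/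
noncomputable section

/-- The matrix `U₀ = [[3p-2, 1-p], [-1, 1]]`. -/
def U0 (p : ℝ) : Matrix (Fin 2) (Fin 2) ℝ := !![3*p - 2, 1 - p; -1, 1]

/-- The matrix `U₁ = [[3p-1, -(2p-1)], [1, 0]]`. -/
def U1 (p : ℝ) : Matrix (Fin 2) (Fin 2) ℝ := !![3*p - 1, -(2*p - 1); 1, 0]

/-- `U_{ε(t)}`, where `ε(t) = 1` if `t ≥ 1/2` and `ε(t) = 0` otherwise. -/
def Ueps (p t : ℝ) : Matrix (Fin 2) (Fin 2) ℝ := if 1/2 ≤ t then U1 p else U0 p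

/-!
On vectors `(θ, 1)ᵀ` the matrices act like `Φ` on `θ`, up to the factor `max(θ, 1 - θ)`:
`U_{ε(θ)} (θ, 1)ᵀ = max(θ, 1 - θ) · (Φ θ, 1)ᵀ`. Iterating from `θ = p`, the product of the
matrices maps `(p, 1)ᵀ` to `(∏ u_k) · (p_{n+1}, 1)ᵀ`, whose second coordinate is `∏ u_k`.
-/

open Matrix

theorem prod_orbit_mulVec_of_mulVec_eq_smul {α R m : Type*} [CommSemiring R] [Fintype m]
    [DecidableEq m] (f : α → α) (A : α → Matrix m m R) (c : α → R) (v : α → m → R)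
    (hA : ∀ x, A x *ᵥ v x = c x • v (f x)) (x : α) (n : ℕ) :
    ((List.range n).reverse.map (fun k => A (f^[k] x))).prod *ᵥ v x
      = (∏ k ∈ Finset.range n, c (f^[k] x)) • v (f^[n] x) := by
  induction n with
  | zero => simp
  | succ n ih =>
    rw [List.range_succ, List.reverse_append, List.reverse_singleton, List.singleton_append,
      List.map_cons, List.prod_cons, ← mulVec_mulVec, ih, mulVec_smul, hA, smul_smul,
      Finset.prod_range_succ, mul_comm, Function.iterate_succ_apply']

-- Neither division in `Φ` is by zero: the divisor is `max θ (1 - θ) ≥ 1/2`.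
theorem Ueps_mulVec (p θ : ℝ) : Ueps p θ *ᵥ ![θ, 1] = max θ (1 - θ) • ![Phi p θ, 1] := by
  by_cases h : 1/2 ≤ θ
  · have hθ : θ ≠ 0 := by linarith
    rw [Ueps, Phi, fB, if_pos h, if_pos h, if_pos h, max_eq_left (by linarith), U1]
    ext i
    fin_cases i <;> simp [mulVec, dotProduct]
    field_simp
    ring
  · have hθ : 1 - θ ≠ 0 := by linarith
    rw [Ueps, Phi, fT, if_neg h, if_neg h, if_neg h, max_eq_right (by linarith), U0]
    ext i
    fin_cases i <;> simp [mulVec, dotProduct]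
    · field_simp
      ring
    · ring

theorem product_formula_general (p : ℝ) (n : ℕ) :
    ∏ k ∈ Finset.range (n+1), max ((Phi p)^[k] p) (1 - (Phi p)^[k] p)
      = ((((List.range (n+1)).reverse.map (fun k => Ueps p ((Phi p)^[k] p))).prod).mulVec
          ![p, 1]) 1 := by
  rw [prod_orbit_mulVec_of_mulVec_eq_smul (Phi p) (Ueps p) (fun θ => max θ (1 - θ))
    (fun θ => ![θ, 1]) (Ueps_mulVec p) p (n + 1)]
  simp

/-- With `p_k = Φ^k(p)`, `u_k = max(p_k, 1-p_k)` and `ε_k = ε(p_k)`, for every `n`: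
`∏_{k=0}^{n} u_k = (0, 1) · U_{ε_n} U_{ε_{n-1}} ⋯ U_{ε_0} · (p, 1)ᵀ` (the second
coordinate of the matrix product, multiplied from index `n` down to `0`, applied
to the vector `(p,1)ᵀ`). -/
theorem product_formula (p : ℝ) (hp : 1/2 ≤ p) (hp1 : p ≤ 1) (n : ℕ) :
    ∏ k ∈ Finset.range (n+1), max ((Phi p)^[k] p) (1 - (Phi p)^[k] p)
      = ((((List.range (n+1)).reverse.map (fun k => Ueps p ((Phi p)^[k] p))).prod).mulVec
          ![p, 1]) 1 :=
  product_formula_general p n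
end
end

section
/- Fix a parameter p with 1/2 ≤ p < 1 and let θ ∈ [0,1]. Then the series w(θ) = Σ_{n=0}^∞ ∏_{k=0}^{n-1} Θ_k(θ) converges, and for every m ≥ 0 the renewal identity w(θ) = Σ_{n=0}^{m} ∏_{k=0}^{n-1} Θ_k(θ) + (∏_{k=0}^{m} Θ_k(θ)) · w(Φ^{m+1}(θ)) holds. -/
/-!
Every iterate `Φ^(k+1)(θ)` lies in `[1-p, p]`, so all factors `Θ_k(θ)` with `k ≥ 1` are at
most `p < 1`, and the partial products are dominated by a geometric series. Since
`Θ_{k+j}(θ) = Θ_k(Φ^j θ)`, the tail of the series after `m+1` terms is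
`∏_{k ≤ m} Θ_k(θ)` times the series for `w(Φ^(m+1) θ)`.
-/

noncomputable section

/-- `Θ_k(θ) = max(Φ^k(θ), 1 - Φ^k(θ))`. -/
def Theta (p : ℝ) (k : ℕ) (θ : ℝ) : ℝ := max ((Phi p)^[k] θ) (1 - (Phi p)^[k] θ)

/-- `w(θ) = Σ_{n=0}^∞ ∏_{k=0}^{n-1} Θ_k(θ)` (empty product = 1). -/
def w (p θ : ℝ) : ℝ := ∑' n : ℕ, ∏ k ∈ Finset.range n, Theta p k θ

open Finset Set

theorem tsum_eq_sum_range_add_mul_tsum {α : Type*} [DivisionRing α] [TopologicalSpace α]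
    [IsTopologicalRing α] [T2Space α] {f g : ℕ → α} {c : α} (hf : Summable f) (n : ℕ)
    (hfg : ∀ i, f (i + n) = c * g i) :
    ∑' i, f i = ∑ i ∈ range n, f i + c * ∑' i, g i := by
  rw [← hf.sum_add_tsum_nat_add n, ← tsum_mul_left]
  simp only [hfg]

section Belief

variable {p : ℝ}

theorem Phi_mem_Icc (hp : 1/2 ≤ p) {x : ℝ} (hx : x ∈ Icc (0:ℝ) 1) :
    Phi p x ∈ Icc (1 - p) p := by
  obtain ⟨hx0, hx1⟩ := hx
  unfold Phi fB fT
  split_ifs with h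
  · have hxpos : (0:ℝ) < x := by linarith
    have hlo : (2*p - 1)/x ≤ 4*p - 2 := by rw [div_le_iff₀ hxpos]; nlinarith
    have hhi : 2*p - 1 ≤ (2*p - 1)/x := by rw [le_div_iff₀ hxpos]; nlinarith
    constructor <;> linarith
  · have hxpos : (0:ℝ) < 1 - x := by linarith
    have hlo : 2*p - 1 ≤ (2*p - 1)/(1 - x) := by rw [le_div_iff₀ hxpos]; nlinarith
    have hhi : (2*p - 1)/(1 - x) ≤ 4*p - 2 := by rw [div_le_iff₀ hxpos]; nlinarith
    constructor <;> linarith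

theorem iterate_succ_Phi_mem_Icc (hp : 1/2 ≤ p) (hp1 : p ≤ 1) {θ : ℝ}
    (hθ : θ ∈ Icc (0:ℝ) 1) (k : ℕ) : (Phi p)^[k+1] θ ∈ Icc (1 - p) p := by
  induction k with
  | zero => exact Phi_mem_Icc hp hθ
  | succ k ih =>
    rw [Function.iterate_succ_apply']
    exact Phi_mem_Icc hp ⟨by linarith [ih.1], by linarith [ih.2]⟩

theorem Theta_nonneg (k : ℕ) (θ : ℝ) : 0 ≤ Theta p k θ := by
  rcases le_total ((Phi p)^[k] θ) (1/2) with h | h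
  · exact le_max_of_le_right (by linarith)
  · exact le_max_of_le_left (by linarith)

theorem Theta_zero_le_one {θ : ℝ} (hθ : θ ∈ Icc (0:ℝ) 1) : Theta p 0 θ ≤ 1 := by
  simp only [Theta, Function.iterate_zero_apply]
  exact max_le hθ.2 (by linarith [hθ.1])

theorem Theta_succ_le (hp : 1/2 ≤ p) (hp1 : p ≤ 1) {θ : ℝ} (hθ : θ ∈ Icc (0:ℝ) 1)
    (k : ℕ) : Theta p (k+1) θ ≤ p :=
  have h := iterate_succ_Phi_mem_Icc hp hp1 hθ k
  max_le h.2 (by linarith [h.1])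

theorem Theta_add (k j : ℕ) (θ : ℝ) : Theta p (k + j) θ = Theta p k ((Phi p)^[j] θ) := by
  simp only [Theta, Function.iterate_add_apply]

theorem prod_range_succ_Theta_le (hp : 1/2 ≤ p) (hp1 : p ≤ 1) {θ : ℝ}
    (hθ : θ ∈ Icc (0:ℝ) 1) (n : ℕ) : ∏ k ∈ range (n+1), Theta p k θ ≤ p^n := by
  have htail : ∏ k ∈ range n, Theta p (k+1) θ ≤ ∏ _k ∈ range n, p :=
    prod_le_prod (fun k _ => Theta_nonneg _ _) (fun k _ => Theta_succ_le hp hp1 hθ k)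
  rw [prod_const, card_range] at htail
  rw [prod_range_succ', ← mul_one (p^n)]
  exact mul_le_mul htail (Theta_zero_le_one hθ) (Theta_nonneg _ _)
    (pow_nonneg (by linarith) n)

theorem summable_prod_range_Theta (hp : 1/2 ≤ p) (hp1 : p < 1) {θ : ℝ}
    (hθ : θ ∈ Icc (0:ℝ) 1) : Summable (fun n : ℕ => ∏ k ∈ range n, Theta p k θ) := by
  rw [← summable_nat_add_iff 1]
  exact (summable_geometric_of_lt_one (by linarith) hp1).of_nonneg_of_le
    (fun n => prod_nonneg fun k _ => Theta_nonneg k θ)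
    (prod_range_succ_Theta_le hp hp1.le hθ)

theorem prod_range_add_Theta (m i : ℕ) (θ : ℝ) :
    ∏ k ∈ range (i + m), Theta p k θ
      = (∏ k ∈ range m, Theta p k θ) * ∏ k ∈ range i, Theta p k ((Phi p)^[m] θ) := by
  rw [add_comm i m, prod_range_add]
  simp only [add_comm m, Theta_add]

end Belief

/-- For `1/2 ≤ p < 1` and `θ ∈ [0,1]`, the series defining `w(θ)` converges and
satisfies the renewal identity
`w(θ) = Σ_{n=0}^{m} ∏_{k<n} Θ_k(θ) + (∏_{k=0}^{m} Θ_k(θ)) · w(Φ^{m+1}(θ))`. -/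
theorem w_renewal (p : ℝ) (hp : 1/2 ≤ p) (hp1 : p < 1)
    (θ : ℝ) (hθ : θ ∈ Set.Icc (0:ℝ) 1) :
    Summable (fun n : ℕ => ∏ k ∈ Finset.range n, Theta p k θ) ∧
    ∀ m : ℕ, w p θ = (∑ n ∈ Finset.range (m+1), ∏ k ∈ Finset.range n, Theta p k θ)
      + (∏ k ∈ Finset.range (m+1), Theta p k θ) * w p ((Phi p)^[m+1] θ) := by
  have hsum := summable_prod_range_Theta hp hp1 hθ
  exact ⟨hsum, fun m =>
    tsum_eq_sum_range_add_mul_tsum hsum (m+1) fun i => prod_range_add_Theta (m+1) i θ⟩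
end
end

section
/- Fix a parameter p with 1/2 < p ≤ 1. For every t ∈ [1/2, 1] one has max(Φ(t), 1 - Φ(t)) = 2 - 3p + (2p-1)/t if t < 2/3, and max(Φ(t), 1 - Φ(t)) = 3p - 1 - (2p-1)/t if t ≥ 2/3. Moreover the function t ↦ max(Φ(t), 1-Φ(t)) is strictly decreasing on [1/2, 2/3], strictly increasing on [2/3, 1], and takes the value 1/2 at t = 2/3. -/
noncomputable section

/-! On `[1/2, 1]` one has `Φ(t) - 1/2 = γ(3t - 2)/(2t)` with `γ = 2p - 1 > 0`, so `max(Φ, 1 - Φ)`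
is `1 - Φ(t) = 2 - 3p + γ/t` up to `2/3` and `Φ(t) = 3p - 1 - γ/t` from `2/3` on; both branches
are strictly monotone because `γ/t` is strictly decreasing. -/

open Set

section
variable {𝕜 : Type*} [Field 𝕜] [LinearOrder 𝕜] [IsStrictOrderedRing 𝕜] {c : 𝕜}

lemma strictAntiOn_add_div (a : 𝕜) (hc : 0 < c) : StrictAntiOn (fun t => a + c / t) (Ioi 0) :=
  fun _ hx _ _ hxy => add_lt_add_right (div_lt_div_of_pos_left hc hx hxy) a

lemma strictMonoOn_sub_div (a : 𝕜) (hc : 0 < c) : StrictMonoOn (fun t => a - c / t) (Ioi 0) :=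
  fun _ hx _ _ hxy => sub_lt_sub_left (div_lt_div_of_pos_left hc hx hxy) a

end

section
variable {p t : ℝ}

lemma Phi_of_half_le (ht : 1/2 ≤ t) : Phi p t = 3*p - 1 - (2*p - 1)/t := by
  simp only [Phi, fB, if_pos ht]

lemma Phi_sub_half_of_half_le (ht : 1/2 ≤ t) :
    Phi p t - 1/2 = (2*p - 1) * (3*t - 2) / (2*t) := by
  rw [Phi_of_half_le ht]
  field_simp
  ring

lemma max_Phi_one_sub_of_le_two_thirds (hp : 1/2 ≤ p) (ht : t ∈ Icc (1/2) (2/3)) :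
    max (Phi p t) (1 - Phi p t) = 2 - 3*p + (2*p - 1)/t := by
  have hle : Phi p t ≤ 1/2 := by
    have hneg : (2*p - 1) * (3*t - 2) / (2*t) ≤ 0 :=
      div_nonpos_of_nonpos_of_nonneg
        (mul_nonpos_of_nonneg_of_nonpos (by linarith) (by linarith [ht.2])) (by linarith [ht.1])
    linarith [Phi_sub_half_of_half_le (p := p) ht.1]
  rw [max_eq_right (by linarith), Phi_of_half_le ht.1]
  ring

lemma max_Phi_one_sub_of_two_thirds_le (hp : 1/2 ≤ p) (ht : 2/3 ≤ t) :
    max (Phi p t) (1 - Phi p t) = 3*p - 1 - (2*p - 1)/t := by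
  have hge : 1/2 ≤ Phi p t := by
    have hpos : 0 ≤ (2*p - 1) * (3*t - 2) / (2*t) :=
      div_nonneg (mul_nonneg (by linarith) (by linarith)) (by linarith)
    linarith [Phi_sub_half_of_half_le (p := p) (show 1/2 ≤ t by linarith)]
  rw [max_eq_left (by linarith), Phi_of_half_le (by linarith)]

end

theorem alpha_branches_and_monotonicity_general (p : ℝ) (hp : 1/2 < p) :
    (∀ t ∈ Set.Icc (1/2 : ℝ) 1,
      (t < 2/3 → max (Phi p t) (1 - Phi p t) = 2 - 3*p + (2*p - 1)/t) ∧
      (2/3 ≤ t → max (Phi p t) (1 - Phi p t) = 3*p - 1 - (2*p - 1)/t)) ∧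
    StrictAntiOn (fun t => max (Phi p t) (1 - Phi p t)) (Set.Icc (1/2 : ℝ) (2/3)) ∧
    StrictMonoOn (fun t => max (Phi p t) (1 - Phi p t)) (Set.Icc (2/3 : ℝ) 1) ∧
    max (Phi p (2/3)) (1 - Phi p (2/3)) = 1/2 := by
  have hγ : 0 < 2*p - 1 := by linarith
  have lower (t : ℝ) (ht : t ∈ Icc (1/2 : ℝ) (2/3)) := max_Phi_one_sub_of_le_two_thirds hp.le ht
  have upper (t : ℝ) (ht : 2/3 ≤ t) := max_Phi_one_sub_of_two_thirds_le hp.le ht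
  refine ⟨fun t ht => ⟨fun h => lower t ⟨ht.1, h.le⟩, upper t⟩, ?_, ?_, ?_⟩
  · refine ((strictAntiOn_add_div _ hγ).mono fun t ht => ?_).congr fun t ht => (lower t ht).symm
    exact lt_of_lt_of_le (by norm_num) ht.1
  · refine ((strictMonoOn_sub_div _ hγ).mono fun t ht => ?_).congr fun t ht => (upper t ht.1).symm
    exact lt_of_lt_of_le (by norm_num) ht.1
  · rw [upper _ le_rfl]
    ring

/-- For `1/2 < p ≤ 1`, on `[1/2, 1]` the map `t ↦ max(Φ(t), 1-Φ(t))` is given by the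
two explicit branches, is strictly decreasing on `[1/2, 2/3]`, strictly increasing on
`[2/3, 1]`, and equals `1/2` at `t = 2/3`. -/
theorem alpha_branches_and_monotonicity (p : ℝ) (hp : 1/2 < p) (hp1 : p ≤ 1) :
    (∀ t ∈ Set.Icc (1/2 : ℝ) 1,
      (t < 2/3 → max (Phi p t) (1 - Phi p t) = 2 - 3*p + (2*p - 1)/t) ∧
      (2/3 ≤ t → max (Phi p t) (1 - Phi p t) = 3*p - 1 - (2*p - 1)/t)) ∧
    StrictAntiOn (fun t => max (Phi p t) (1 - Phi p t)) (Set.Icc (1/2 : ℝ) (2/3)) ∧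
    StrictMonoOn (fun t => max (Phi p t) (1 - Phi p t)) (Set.Icc (2/3 : ℝ) 1) ∧
    max (Phi p (2/3)) (1 - Phi p (2/3)) = 1/2 :=
  alpha_branches_and_monotonicity_general p hp
end
end
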